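/- (Limit of the regularized coefficients as λ → ∞.) Let R̃ ∈ ℝ^{d×(k+1)} be any matrix and for each λ > 0 let c̃^λ be the regularized extrapolation coefficients computed from R̃. Then c̃^λ converges to the uniform averaging vector (1/(k+1))·𝟙 as λ → ∞; i.e., the extrapolated point Σ_{i=0}^{k} c̃^λ_i x̃_i converges to the average (1/(k+1)) Σ_{i=0}^{k} x̃_i for any fixed vectors x̃_0,…,x̃_k ∈ ℝ^d. -/

import Mathlib

/-!
Every `v` with coordinate sum `1` has `⟪v, u⟫ = ‖u‖²` for the uniform vector `u`, so
`‖v - u‖² = ‖v‖² - ‖u‖²`. Comparing the minimizer `c^λ` with the admissible vector `u` gives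
`λ (‖c^λ‖² - ‖u‖²) ≤ ‖M u‖²`, hence `‖c^λ - u‖² ≤ ‖M u‖² / λ → 0`.
-/

open Matrix Filter

/-- `c` is the vector of regularized extrapolation coefficients for the matrix `M`
and regularization parameter `lam`: it minimizes `‖M c‖² + lam ‖c‖²` over `{c : 𝟙ᵀc = 1}`. -/
def IsRNACoeff {d k : ℕ} (M : Matrix (Fin d) (Fin (k+1)) ℝ) (lam : ℝ)
    (c : EuclideanSpace ℝ (Fin (k+1))) : Prop :=
  (∑ i, c i) = 1 ∧ ∀ c' : EuclideanSpace ℝ (Fin (k+1)), (∑ i, c' i) = 1 →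
    ‖Matrix.toEuclideanLin M c‖ ^ 2 + lam * ‖c‖ ^ 2 ≤
      ‖Matrix.toEuclideanLin M c'‖ ^ 2 + lam * ‖c'‖ ^ 2

open Topology RealInnerProductSpace

noncomputable def uniformWeights (ι : Type*) [Fintype ι] : EuclideanSpace ℝ ι :=
  WithLp.toLp 2 fun _ => 1 / (Fintype.card ι : ℝ)

section UniformWeights

variable {ι : Type*} [Fintype ι]

theorem inner_uniformWeights (v : EuclideanSpace ℝ ι) :
    ⟪v, uniformWeights ι⟫ = (∑ i, v i) / Fintype.card ι := by
  simp only [PiLp.inner_apply, RCLike.inner_apply, starRingEnd_apply, star_trivial,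
    uniformWeights, ← Finset.mul_sum]
  ring

theorem sum_uniformWeights [Nonempty ι] : ∑ i, uniformWeights ι i = 1 := by
  simp [uniformWeights]

theorem norm_sub_uniformWeights_sq [Nonempty ι] {v : EuclideanSpace ℝ ι} (hv : ∑ i, v i = 1) :
    ‖v - uniformWeights ι‖ ^ 2 = ‖v‖ ^ 2 - ‖uniformWeights ι‖ ^ 2 := by
  rw [norm_sub_sq_real, ← real_inner_self_eq_norm_sq (uniformWeights ι), inner_uniformWeights,
    inner_uniformWeights, hv, sum_uniformWeights]
  ring

end UniformWeights

theorem IsRNACoeff.norm_sub_uniformWeights_sq_le {d k : ℕ} {M : Matrix (Fin d) (Fin (k+1)) ℝ}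
    {lam : ℝ} {c : EuclideanSpace ℝ (Fin (k+1))} (hc : IsRNACoeff M lam c) (hlam : 0 < lam) :
    ‖c - uniformWeights _‖ ^ 2 ≤ ‖toEuclideanLin M (uniformWeights _)‖ ^ 2 / lam := by
  have hmin := hc.2 _ sum_uniformWeights
  rw [norm_sub_uniformWeights_sq hc.1, le_div_iff₀ hlam]
  nlinarith [sq_nonneg ‖toEuclideanLin M c‖]

theorem tendsto_of_norm_sub_sq_le_div {E : Type*} [SeminormedAddCommGroup E] {f : ℝ → E} {a : E}
    {C : ℝ} (hf : ∀ᶠ t in atTop, ‖f t - a‖ ^ 2 ≤ C / t) : Tendsto f atTop (𝓝 a) := by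
  have hbound : Tendsto (fun t => √(C / t)) atTop (𝓝 0) := by
    simpa using (tendsto_const_nhds.div_atTop tendsto_id).sqrt
  rw [tendsto_iff_norm_sub_tendsto_zero]
  refine squeeze_zero' (.of_forall fun _ => norm_nonneg _) ?_ hbound
  filter_upwards [hf] with t ht
  exact Real.le_sqrt_of_sq_le ht

/-- As `λ → ∞`, the regularized extrapolation coefficients converge to the uniform
averaging vector `(1/(k+1))·𝟙`, and the extrapolated point converges to the plain average
of the iterates. -/
theorem rna_coeffs_tendsto_average (d k : ℕ) (Rt : Matrix (Fin d) (Fin (k+1)) ℝ)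
    (c : ℝ → EuclideanSpace ℝ (Fin (k+1)))
    (hc : ∀ lam : ℝ, 0 < lam → IsRNACoeff Rt lam (c lam)) :
    Tendsto c atTop (nhds (WithLp.toLp 2 (fun _ => 1 / ((k : ℝ) + 1)) : EuclideanSpace ℝ (Fin (k+1)))) ∧
    ∀ xt : Fin (k+1) → EuclideanSpace ℝ (Fin d),
      Tendsto (fun lam => ∑ i : Fin (k+1), c lam i • xt i) atTop
        (nhds ((1 / ((k : ℝ) + 1)) • ∑ i : Fin (k+1), xt i)) := by
  have huniform : uniformWeights (Fin (k+1)) = WithLp.toLp 2 fun _ => 1 / ((k : ℝ) + 1) := by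
    simp [uniformWeights]
  have hlim : Tendsto c atTop (𝓝 (uniformWeights _)) :=
    tendsto_of_norm_sub_sq_le_div <| (eventually_gt_atTop 0).mono fun lam hlam =>
      (hc lam hlam).norm_sub_uniformWeights_sq_le hlam
  rw [huniform] at hlim
  refine ⟨hlim, fun xt => ?_⟩
  rw [Finset.smul_sum]
  exact tendsto_finsetSum _ fun i _ =>
    (((PiLp.continuous_apply 2 _ i).tendsto _).comp hlim).smul_const (xt i)
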